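/- arXiv:1409.0141 — 2 statements merged into one kernel-verified Lean document; each statement's English description precedes it below -/
import Mathlib

section
/- Let T be the ℵ₀-regular tree, λ the permutation representation of Aut(T), L* : ℓ_∞(T) → ℓ_∞(T) the adjoint of the parent operator L, and d(g) = L*λ(g) − λ(g)L* the associated derivation. If A : ℓ₂(T) → ℂ^T is any linear operator (not assumed bounded) with d(g) = Aλ(g) − λ(g)A for all g ∈ Aut(T), then A = L* + ϑ·Id for some ϑ ∈ ℂ. -/
open scoped ENNReal

noncomputable section

/-- The vertex set of the `ℵ₀`-regular tree, realised as the free group `F_∞`. -/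
abbrev V : Type := FreeGroup ℕ

/-- The Cayley graph of `F_∞` with respect to its free generating set:
the `ℵ₀`-regular tree `T`. -/
def treeGraph : SimpleGraph V :=
  SimpleGraph.fromRel (fun s t => ∃ i : ℕ, t = s * FreeGroup.of i)

/-- The automorphism group `Aut(T)` of the `ℵ₀`-regular tree. -/
abbrev TreeAut := treeGraph ≃g treeGraph

/-- `ℓ_p(T)`. -/
abbrev lpT (p : ℝ≥0∞) := lp (fun _ : V => ℂ) p

lemma memℓp_comp {p : ℝ≥0∞} (g : V ≃ V) {x : V → ℂ} (h : Memℓp x p) :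
    Memℓp (fun v => x (g v)) p := by
  rcases ENNReal.trichotomy p with rfl | rfl | hp
  · rw [memℓp_zero_iff] at h ⊢
    exact Set.Finite.preimage g.injective.injOn h
  · rw [memℓp_infty_iff] at h ⊢
    apply h.mono
    rintro r ⟨v, rfl⟩
    exact ⟨g v, rfl⟩
  · apply memℓp_gen
    exact (g.summable_iff (f := fun v => ‖x v‖ ^ p.toReal)).2 ((memℓp_gen_iff hp).1 h)

/-- The shift representation of permutations of `T` on `ℂ^T`: `λ(g)x = x(g⁻¹ ·)`. -/
def lamFull (g : V ≃ V) : (V → ℂ) →ₗ[ℂ] (V → ℂ) where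
  toFun x := fun v => x (g.symm v)
  map_add' _ _ := rfl
  map_smul' _ _ := rfl

/-- The shift representation of permutations of `T` on `ℓ_p(T)`: `λ(g)x = x(g⁻¹ ·)`. -/
def lam (p : ℝ≥0∞) (g : V ≃ V) : lpT p →ₗ[ℂ] lpT p where
  toFun x := ⟨fun v => x (g.symm v), memℓp_comp g.symm (lp.memℓp x)⟩
  map_add' _ _ := rfl
  map_smul' _ _ := rfl

attribute [local instance] Classical.propDecidable

/-- The fixed root `e` of the tree. -/
def root : V := 1

/-- `ŝ`: the parent of the vertex `s`, i.e. the penultimate vertex on the geodesic from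
the root `e` to `s` (with `ê = e`), obtained by dropping the last letter of the reduced
word `s`. -/
def parent (s : V) : V := FreeGroup.mk s.toWord.dropLast

/-- The adjoint `L*` of the parent operator `L`, as an operator on `ℂ^T`:
`(L* y)(s) = y(ŝ)` for `s ≠ e` and `(L* y)(e) = 0`; equivalently `L*(𝟙_s) = Σ_{t̂ = s} 𝟙_t`. -/
def Lstar : (V → ℂ) →ₗ[ℂ] (V → ℂ) where
  toFun x := fun v => if v = root then 0 else x (parent v)
  map_add' x y := by
    funext v; by_cases h : v = root <;> simp [h]
  map_smul' c x := by
    funext v; by_cases h : v = root <;> simp [h]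

/-- The derivation `d(g) = L*λ(g) − λ(g)L*`, as an operator on `ℂ^T`. -/
def dtree (g : V ≃ V) : (V → ℂ) →ₗ[ℂ] (V → ℂ) :=
  Lstar ∘ₗ lamFull g - lamFull g ∘ₗ Lstar

/-!
Put `B = A - L*`. The hypothesis says exactly that `B` intertwines `λ(g)` on `ℓ₂(T)` with `λ(g)` on
`ℂ^T`, so `φ x = (B x)(e)` is a linear functional invariant under the stabiliser of the root `e`.
As `A` is not assumed bounded, this invariance can only be used algebraically: every `x ∈ ℓ₂(T)`
with `x(e) = 0` is `Σᵢ (z - λ(gᵢ) z)` for three root-fixing automorphisms `gᵢ` and some `z`, hence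
`φ` vanishes on it and `φ = θ · x(e)`; transitivity of the left translations then gives
`B = θ · Id`.

The decomposition is a spectral-gap argument. The `gᵢ` permute the generators of `F_∞` so that
`gᵢ` exchanges a set `Dᵢ` of vertices (determined by the first letter of the reduced word) with its
complement, the `Dᵢ` being disjoint. A Schur test with weights `3/2` on `Dᵢ` and `2/3` off it gives
`‖x‖² ≤ 3 Σᵢ ‖x - λ(gᵢ) x‖²` when `x(e) = 0`, so `Σᵢ (1 - λ(gᵢ))` is coercive, hence onto, on that
subspace.
-/

open Function RCLike

lemma Equiv.Perm.exists_mem_iff_not_mem {α : Type*} {s : Set α} (e : s ≃ (sᶜ : Set α)) :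
    ∃ σ : Equiv.Perm α, ∀ a, σ a ∈ s ↔ a ∉ s := by
  classical
  refine ⟨Equiv.subtypeCongr e (e.symm.trans (Equiv.subtypeEquivRight fun _ => not_not.symm)),
    fun a => ?_⟩
  by_cases ha : a ∈ s
  · simp [Equiv.subtypeCongr, Equiv.sumCompl, ha]
    exact (e ⟨a, ha⟩).2
  · simp [Equiv.subtypeCongr, Equiv.sumCompl, ha]

lemma FreeGroup.toWord_map {α β : Type*} [DecidableEq α] [DecidableEq β] {f : α → β}
    (hf : Injective f) (w : FreeGroup α) :
    (FreeGroup.map f w).toWord = w.toWord.map (Prod.map f id) := by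
  have h := FreeGroup.map.mk (f := f) (L := w.toWord)
  rw [FreeGroup.mk_toWord] at h
  rw [h, FreeGroup.toWord_mk]
  apply FreeGroup.IsReduced.reduce_eq
  exact (List.isChain_map _).2 (FreeGroup.isReduced_toWord.imp fun _ _ h hab => h (hf hab))

section SchurTest

variable {X : Type*}

-- Any `t ∈ (1, 2)` in place of `3 / 2` works: three disjoint sets give row sums `t + 2 / t < 3`.
def schurWeight (D : Set X) (v : X) : ℝ := if v ∈ D then 3 / 2 else 2 / 3

lemma schurWeight_pos (D : Set X) (v : X) : 0 < schurWeight D v := by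
  unfold schurWeight; split_ifs <;> norm_num

lemma schurWeight_le (D : Set X) (v : X) : schurWeight D v ≤ 3 / 2 := by
  unfold schurWeight; split_ifs <;> norm_num

lemma schurWeight_of_flip {D : Set X} {v w : X} (h : w ∈ D ↔ v ∉ D) :
    schurWeight D w = (schurWeight D v)⁻¹ := by
  unfold schurWeight; by_cases hv : v ∈ D <;> simp [hv, h]

lemma sum_schurWeight_le {D : Fin 3 → Set X} (hD : Pairwise (Disjoint on D)) (v : X) :
    ∑ i, schurWeight (D i) v ≤ 17 / 6 := by
  have hmem : ∀ i j, v ∈ D i → v ∈ D j → i = j := fun i j hi hj =>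
    by_contra fun hij => Set.disjoint_left.1 (hD hij) hi hj
  simp only [Fin.sum_univ_three, schurWeight]
  split_ifs with h0 h1 h2 h2 h1 h2 h2 <;> norm_num
  all_goals first
    | exact absurd (hmem 0 1 h0 h1) (by decide)
    | exact absurd (hmem 0 2 h0 h2) (by decide)
    | exact absurd (hmem 1 2 h1 h2) (by decide)

lemma two_mul_le_mul_sq_add_inv_mul_sq {w : ℝ} (hw : 0 < w) (b c : ℝ) :
    2 * (b * c) ≤ w * b ^ 2 + w⁻¹ * c ^ 2 := by
  have h : w * b ^ 2 + w⁻¹ * c ^ 2 - 2 * (b * c) = w⁻¹ * (w * b - c) ^ 2 := by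
    field_simp; ring
  nlinarith [mul_nonneg (inv_nonneg.2 hw.le) (sq_nonneg (w * b - c))]

variable {a : X → ℝ}

lemma summable_mul_comp (ha : 0 ≤ a) (ha2 : Summable fun v => a v ^ 2) (g : X ≃ X) :
    Summable fun v => a v * a (g v) := by
  have hg2 : Summable fun v => a (g v) ^ 2 := (g.summable_iff (f := fun v => a v ^ 2)).2 ha2
  refine .of_nonneg_of_le (fun v => mul_nonneg (ha v) (ha _)) (fun v => ?_) (ha2.add hg2)
  nlinarith [sq_nonneg (a v - a (g v))]

lemma tsum_sq_sub_comp (ha : 0 ≤ a) (ha2 : Summable fun v => a v ^ 2) (g : X ≃ X) :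
    ∑' v, (a v - a (g v)) ^ 2 = 2 * ∑' v, a v ^ 2 - 2 * ∑' v, a v * a (g v) := by
  have hg2 : Summable fun v => a (g v) ^ 2 := (g.summable_iff (f := fun v => a v ^ 2)).2 ha2
  have hc := summable_mul_comp ha ha2 g
  calc ∑' v, (a v - a (g v)) ^ 2 = ∑' v, (a v ^ 2 + a (g v) ^ 2 - 2 * (a v * a (g v))) :=
        tsum_congr fun v => by ring
    _ = 2 * ∑' v, a v ^ 2 - 2 * ∑' v, a v * a (g v) := by
        rw [(ha2.add hg2).tsum_sub (hc.mul_left 2), ha2.tsum_add hg2, tsum_mul_left,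
          g.tsum_eq (fun v => a v ^ 2)]
        ring

lemma summable_schurWeight_mul_sq (D : Set X) (ha2 : Summable fun v => a v ^ 2) :
    Summable fun v => schurWeight D v * a v ^ 2 :=
  .of_nonneg_of_le (fun v => mul_nonneg (schurWeight_pos D v).le (sq_nonneg _))
    (fun v => mul_le_mul_of_nonneg_right (schurWeight_le D v) (sq_nonneg _)) (ha2.mul_left (3 / 2))

lemma tsum_mul_comp_le (ha : 0 ≤ a) (ha2 : Summable fun v => a v ^ 2) {o : X} (hao : a o = 0)
    {g : X ≃ X} (hgo : g o = o) {D : Set X} (hflip : ∀ v, v ≠ o → (g v ∈ D ↔ v ∉ D)) :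
    ∑' v, a v * a (g v) ≤ ∑' v, schurWeight D v * a v ^ 2 := by
  set b : X → ℝ := fun v => schurWeight D v * a v ^ 2
  have hb : Summable b := summable_schurWeight_mul_sq D ha2
  have hbg : Summable fun v => b (g v) := (g.summable_iff (f := b)).2 hb
  have hpoint : ∀ v, 2 * (a v * a (g v)) ≤ b v + b (g v) := by
    intro v
    by_cases hv : v = o
    · simp only [b, hv, hgo, hao]; norm_num
    · simp only [b, schurWeight_of_flip (hflip v hv)]
      exact two_mul_le_mul_sq_add_inv_mul_sq (schurWeight_pos D v) _ _
  have h := ((summable_mul_comp ha ha2 g).mul_left 2).tsum_le_tsum hpoint (hb.add hbg)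
  rw [tsum_mul_left, hb.tsum_add hbg, g.tsum_eq b] at h
  linarith

theorem tsum_sq_le_three_mul_sum_tsum_sq_sub_comp (ha : 0 ≤ a) (ha2 : Summable fun v => a v ^ 2)
    {o : X} (hao : a o = 0) {g : Fin 3 → X ≃ X} (hgo : ∀ i, g i o = o) {D : Fin 3 → Set X}
    (hD : Pairwise (Disjoint on D)) (hflip : ∀ i v, v ≠ o → (g i v ∈ D i ↔ v ∉ D i)) :
    ∑' v, a v ^ 2 ≤ 3 * ∑ i, ∑' v, (a v - a (g i v)) ^ 2 := by
  have hw : ∀ i, Summable fun v => schurWeight (D i) v * a v ^ 2 := fun i =>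
    summable_schurWeight_mul_sq (D i) ha2
  have hsum : ∑ i, ∑' v, schurWeight (D i) v * a v ^ 2 ≤ 17 / 6 * ∑' v, a v ^ 2 := by
    rw [← Summable.tsum_finsetSum fun i _ => hw i, ← tsum_mul_left]
    refine (summable_sum fun i _ => hw i).tsum_le_tsum (fun v => ?_) (ha2.mul_left _)
    rw [← Finset.sum_mul]
    exact mul_le_mul_of_nonneg_right (sum_schurWeight_le hD v) (sq_nonneg _)
  have hmul : ∑ i, ∑' v, a v * a (g i v) ≤ ∑ i, ∑' v, schurWeight (D i) v * a v ^ 2 :=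
    Finset.sum_le_sum fun i _ => tsum_mul_comp_le ha ha2 hao (hgo i) (hflip i)
  simp only [tsum_sq_sub_comp ha ha2, Fin.sum_univ_three] at hmul hsum ⊢
  linarith

end SchurTest

section Coercive

variable {𝕜 E : Type*} [RCLike 𝕜] [NormedAddCommGroup E] [InnerProductSpace 𝕜 E]

lemma LinearIsometry.re_inner_sub_apply_self (U : E →ₗᵢ[𝕜] E) (z : E) :
    re (inner 𝕜 (z - U z) z) = ‖z - U z‖ ^ 2 / 2 := by
  rw [norm_sub_sq (𝕜 := 𝕜), inner_sub_left, map_sub, inner_re_symm (U z) z, U.norm_map,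
    inner_self_eq_norm_sq]
  ring

theorem ContinuousLinearMap.surjective_of_coercive [CompleteSpace E] (T : E →L[𝕜] E) {c : ℝ}
    (hc : 0 < c) (hT : ∀ z, c * ‖z‖ ^ 2 ≤ re (inner 𝕜 (T z) z)) : Surjective T := by
  have hbound : ∀ z, ‖z‖ ≤ c⁻¹ * ‖T z‖ := fun z => by
    rw [le_inv_mul_iff₀ hc]
    rcases (norm_nonneg z).eq_or_lt with hz | hz
    · rw [← hz]; simp
    · have := (hT z).trans (re_inner_le_norm (T z) z)
      nlinarith
  have hanti : AntilipschitzWith c⁻¹.toNNReal T :=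
    T.antilipschitz_of_bound fun z => by
      rw [Real.coe_toNNReal _ (inv_nonneg.2 hc.le)]; exact hbound z
  have hclosed : IsClosed (LinearMap.range (T : E →ₗ[𝕜] E) : Set E) := by
    rw [LinearMap.coe_range]; exact hanti.isClosed_range T.uniformContinuous
  have : CompleteSpace (LinearMap.range (T : E →ₗ[𝕜] E)) := hclosed.completeSpace_coe
  have horth : (LinearMap.range (T : E →ₗ[𝕜] E))ᗮ = ⊥ := by
    refine (Submodule.eq_bot_iff _).2 fun z hz => ?_
    have h0 : inner 𝕜 (T z) z = 0 := (Submodule.mem_orthogonal _ z).1 hz (T z) ⟨z, rfl⟩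
    have := hT z
    rw [h0, map_zero] at this
    exact norm_eq_zero.1 (pow_eq_zero_iff two_ne_zero |>.1
      (le_antisymm (by nlinarith) (sq_nonneg _)))
  exact LinearMap.range_eq_top.1 (Submodule.orthogonal_eq_bot_iff.1 horth)

theorem ContinuousLinearMap.exists_apply_eq_of_coercive_on (T : E →L[𝕜] E) (K : Submodule 𝕜 E)
    [CompleteSpace K] (hTK : ∀ z ∈ K, T z ∈ K) {c : ℝ} (hc : 0 < c)
    (hT : ∀ z ∈ K, c * ‖z‖ ^ 2 ≤ re (inner 𝕜 (T z) z)) {x : E} (hx : x ∈ K) :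
    ∃ z, T z = x := by
  let T' : K →L[𝕜] K := (T ∘L K.subtypeL).codRestrict K fun z => hTK z z.2
  obtain ⟨z, hz⟩ := T'.surjective_of_coercive hc (fun z => hT z z.2) ⟨x, hx⟩
  exact ⟨z, congrArg Subtype.val hz⟩

end Coercive

lemma exists_perms_flipping_disjoint_sets :
    ∃ (E : Fin 3 → Set ℕ) (σ : Fin 3 → Equiv.Perm ℕ),
      Pairwise (Disjoint on E) ∧ ∀ i n, σ i n ∈ E i ↔ n ∉ E i := by
  let E : Fin 3 → Set ℕ := fun i => {n | n % 3 = i}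
  have hσ : ∀ i, ∃ σ : Equiv.Perm ℕ, ∀ n, σ n ∈ E i ↔ n ∉ E i := fun i => by
    have : Infinite (E i) :=
      (Nat.frequently_atTop_iff_infinite.1 (Nat.frequently_mod_eq i.2)).to_subtype
    have : Infinite ((E i)ᶜ : Set ℕ) :=
      ((Nat.frequently_atTop_iff_infinite.1 (Nat.frequently_mod_eq (i + 1 : Fin 3).2)).mono
        fun n hn h => by
          simp only [E, Set.mem_ofPred_eq] at hn h; omega).to_subtype
    exact Equiv.Perm.exists_mem_iff_not_mem nonempty_equiv_of_countable.some
  choose σ hσ using hσ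
  exact ⟨E, σ, fun i j hij => Set.disjoint_left.2 fun n hi hj => hij (Fin.ext (hi.symm.trans hj)),
    hσ⟩

lemma treeGraph_adj {s t : V} :
    treeGraph.Adj s t ↔
      s ≠ t ∧ (s⁻¹ * t ∈ Set.range FreeGroup.of ∨ t⁻¹ * s ∈ Set.range FreeGroup.of) := by
  simp only [treeGraph, SimpleGraph.fromRel_adj, Set.mem_range, eq_inv_mul_iff_mul_eq, eq_comm]

def mulLeftAut (u : V) : TreeAut where
  toEquiv := Equiv.mulLeft u
  map_rel_iff' := by simp [treeGraph_adj, mul_assoc]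

def genPermAut (σ : Equiv.Perm ℕ) : TreeAut where
  toEquiv := (FreeGroup.freeGroupCongr σ).toEquiv
  map_rel_iff' {s t} := by
    have hof : ∀ w : V,
        FreeGroup.freeGroupCongr σ w ∈ Set.range FreeGroup.of ↔ w ∈ Set.range FreeGroup.of := by
      refine fun w => ⟨?_, ?_⟩
      · rintro ⟨i, hi⟩
        refine ⟨σ.symm i, ?_⟩
        apply (FreeGroup.freeGroupCongr σ).injective
        simp [hi]
      · rintro ⟨i, rfl⟩
        exact ⟨σ i, by simp⟩
    simp only [treeGraph_adj, MulEquiv.toEquiv_eq_coe, EquivLike.coe_coe, ne_eq,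
      EmbeddingLike.apply_eq_iff_eq, ← map_inv, ← map_mul, hof]

lemma genPermAut_apply (σ : Equiv.Perm ℕ) (v : V) : genPermAut σ v = FreeGroup.map σ v := rfl

lemma genPermAut_one (σ : Equiv.Perm ℕ) : genPermAut σ 1 = 1 := map_one (FreeGroup.map σ)

def headGen (v : V) : ℕ := v.toWord.headI.1

lemma headGen_map {σ : Equiv.Perm ℕ} {v : V} (hv : v ≠ 1) :
    headGen (FreeGroup.map σ v) = σ (headGen v) := by
  unfold headGen
  rw [FreeGroup.toWord_map σ.injective]
  cases h : v.toWord with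
  | nil => exact absurd (FreeGroup.toWord_eq_nil_iff.1 h) hv
  | cons p w => rfl

lemma exists_stabilizer_flipping_disjoint_sets :
    ∃ (g : Fin 3 → TreeAut) (D : Fin 3 → Set V), Pairwise (Disjoint on D) ∧
      (∀ i, g i 1 = 1) ∧ ∀ i v, v ≠ 1 → (g i v ∈ D i ↔ v ∉ D i) := by
  obtain ⟨E, σ, hE, hσ⟩ := exists_perms_flipping_disjoint_sets
  refine ⟨fun i => genPermAut (σ i), fun i => {v | v ≠ 1 ∧ headGen v ∈ E i}, ?_,
    fun i => genPermAut_one _, ?_⟩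
  · exact fun i j hij => Set.disjoint_left.2 fun v hi hj => Set.disjoint_left.1 (hE hij) hi.2 hj.2
  · intro i v hv
    have hgv : FreeGroup.map (σ i) v ≠ 1 := by
      rw [← genPermAut_apply, ← genPermAut_one (σ i)]
      exact (genPermAut (σ i)).injective.ne hv
    simp [hv, hgv, genPermAut_apply, headGen_map hv, hσ]

lemma lpT_two_norm_sq (x : lpT 2) : ‖x‖ ^ 2 = ∑' v, ‖x v‖ ^ 2 := by
  simpa using lp.norm_rpow_eq_tsum (p := 2) (by norm_num) x

lemma lpT_two_summable_norm_sq (x : lpT 2) : Summable fun v => ‖x v‖ ^ 2 := by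
  simpa using (lp.memℓp x).summable (p := 2) (by norm_num)

@[simp]
lemma lam_apply {p : ℝ≥0∞} (g : V ≃ V) (x : lpT p) (v : V) : lam p g x v = x (g.symm v) := rfl

lemma coe_lam {p : ℝ≥0∞} (g : V ≃ V) (x : lpT p) : (lam p g x : V → ℂ) = lamFull g x := rfl

lemma norm_lam (g : V ≃ V) (x : lpT 2) : ‖lam 2 g x‖ = ‖x‖ := by
  refine (pow_left_inj₀ (norm_nonneg _) (norm_nonneg _) two_ne_zero).1 ?_
  rw [lpT_two_norm_sq, lpT_two_norm_sq, ← g.tsum_eq]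
  simp

lemma norm_sub_lam_sq (g : V ≃ V) (x : lpT 2) :
    ‖x - lam 2 g x‖ ^ 2 = ∑' v, ‖x v - x (g v)‖ ^ 2 := by
  rw [lpT_two_norm_sq, ← g.tsum_eq]
  simp [norm_sub_rev]

theorem norm_sq_le_three_mul_sum_norm_sub_lam_sq {g : Fin 3 → V ≃ V} (hg1 : ∀ i, g i 1 = 1)
    {D : Fin 3 → Set V} (hD : Pairwise (Disjoint on D))
    (hflip : ∀ i v, v ≠ 1 → (g i v ∈ D i ↔ v ∉ D i)) {x : lpT 2} (hx : x 1 = 0) :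
    ‖x‖ ^ 2 ≤ 3 * ∑ i, ‖x - lam 2 (g i) x‖ ^ 2 := by
  have hsq : ∀ i, ∑' v, (‖x v‖ - ‖x (g i v)‖) ^ 2 ≤ ‖x - lam 2 (g i) x‖ ^ 2 := fun i => by
    have hle : ∀ v, (‖x v‖ - ‖x (g i v)‖) ^ 2 ≤ ‖x v - x (g i v)‖ ^ 2 := fun v =>
      sq_le_sq' (abs_le.1 (abs_norm_sub_norm_le _ _)).1 (abs_le.1 (abs_norm_sub_norm_le _ _)).2
    have hs : Summable fun v => ‖x v - x (g i v)‖ ^ 2 := by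
      simpa using lpT_two_summable_norm_sq (x - lam 2 (g i).symm x)
    rw [norm_sub_lam_sq]
    exact Summable.tsum_le_tsum hle (hs.of_nonneg_of_le (fun _ => sq_nonneg _) hle) hs
  calc ‖x‖ ^ 2 = ∑' v, ‖x v‖ ^ 2 := lpT_two_norm_sq x
    _ ≤ 3 * ∑ i, ∑' v, (‖x v‖ - ‖x (g i v)‖) ^ 2 :=
      tsum_sq_le_three_mul_sum_tsum_sq_sub_comp (fun v => norm_nonneg _)
        (lpT_two_summable_norm_sq x) (by simp [hx]) hg1 hD hflip
    _ ≤ 3 * ∑ i, ‖x - lam 2 (g i) x‖ ^ 2 := by gcongr with i; exact hsq i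

def lamIsometry (g : V ≃ V) : lpT 2 →ₗᵢ[ℂ] lpT 2 := ⟨lam 2 g, norm_lam g⟩

theorem exists_sum_sub_lam_eq {g : Fin 3 → V ≃ V} (hg1 : ∀ i, g i 1 = 1)
    {D : Fin 3 → Set V} (hD : Pairwise (Disjoint on D))
    (hflip : ∀ i v, v ≠ 1 → (g i v ∈ D i ↔ v ∉ D i)) {x : lpT 2} (hx : x 1 = 0) :
    ∃ z : lpT 2, ∑ i, (z - lam 2 (g i) z) = x := by
  let T : lpT 2 →L[ℂ] lpT 2 := ∑ i, (1 - (lamIsometry (g i)).toContinuousLinearMap)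
  have hT : ∀ z, T z = ∑ i, (z - lam 2 (g i) z) := fun z => by
    simp [T, lamIsometry]
  let K := (lp.evalCLM ℂ (fun _ : V => ℂ) 2 1).ker
  have : CompleteSpace K := (lp.evalCLM ℂ (fun _ : V => ℂ) 2 1).isClosed_ker.completeSpace_coe
  have hTK : ∀ z ∈ K, T z ∈ K := fun z hz => by
    rw [hT]
    refine K.sum_mem fun i _ => K.sub_mem hz ?_
    change z ((g i).symm 1) = 0
    rwa [(g i).symm_apply_eq.2 (hg1 i).symm]
  have hcoer : ∀ z ∈ K, 1 / 6 * ‖z‖ ^ 2 ≤ re (inner ℂ (T z) z) := fun z hz => by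
    have := norm_sq_le_three_mul_sum_norm_sub_lam_sq hg1 hD hflip (x := z) hz
    calc 1 / 6 * ‖z‖ ^ 2 ≤ ∑ i, ‖z - lam 2 (g i) z‖ ^ 2 / 2 := by
          rw [← Finset.sum_div]; linarith
      _ = re (inner ℂ (T z) z) := by
          rw [hT, sum_inner, map_sum]
          exact Finset.sum_congr rfl fun i _ =>
            ((lamIsometry (g i)).re_inner_sub_apply_self z).symm
  obtain ⟨z, hz⟩ := T.exists_apply_eq_of_coercive_on K hTK (by norm_num) hcoer hx
  exact ⟨z, (hT z).symm.trans hz⟩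

theorem apply_eq_zero_of_stabilizer_invariant (φ : lpT 2 →ₗ[ℂ] ℂ)
    (hφ : ∀ g : TreeAut, g 1 = 1 → ∀ x, φ (lam 2 g.toEquiv x) = φ x) {x : lpT 2} (hx : x 1 = 0) :
    φ x = 0 := by
  obtain ⟨g, D, hD, hg1, hflip⟩ := exists_stabilizer_flipping_disjoint_sets
  obtain ⟨z, rfl⟩ := exists_sum_sub_lam_eq (g := fun i => (g i).toEquiv) hg1 hD hflip hx
  simp [hφ _ (hg1 _)]

theorem exists_eq_smul_of_intertwines_lam (B : lpT 2 →ₗ[ℂ] (V → ℂ))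
    (hB : ∀ (g : TreeAut) x, B (lam 2 g.toEquiv x) = lamFull g.toEquiv (B x)) :
    ∃ θ : ℂ, ∀ x : lpT 2, B x = θ • (x : V → ℂ) := by
  have heval : ∀ (g : TreeAut) x, B x (g.toEquiv.symm 1) = B (lam 2 g.toEquiv x) 1 :=
    fun g x => by rw [hB]; rfl
  have hroot : ∀ x : lpT 2, x 1 = 0 → B x 1 = 0 := fun x hx =>
    apply_eq_zero_of_stabilizer_invariant ((LinearMap.proj 1).comp B)
      (fun g hg y => by simp [← heval, (g.toEquiv.symm_apply_eq).2 hg.symm]) hx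
  set δ : lpT 2 := lp.single 2 (1 : V) (1 : ℂ)
  have hδ : δ 1 = 1 := lp.single_apply_self _ _ _
  have hroot_eq : ∀ x : lpT 2, B x 1 = B δ 1 * x 1 := fun x => by
    have := hroot (x - x 1 • δ) (by
      simp only [lp.coeFn_sub, lp.coeFn_smul, Pi.sub_apply, Pi.smul_apply, hδ, smul_eq_mul,
        mul_one, sub_self])
    simpa [sub_eq_zero, mul_comm] using this
  refine ⟨B δ 1, fun x => funext fun u => ?_⟩
  have hu : (mulLeftAut u⁻¹).toEquiv.symm 1 = u := by simp [mulLeftAut]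
  calc B x u = B x ((mulLeftAut u⁻¹).toEquiv.symm 1) := by rw [hu]
    _ = B (lam 2 (mulLeftAut u⁻¹).toEquiv x) 1 := heval _ x
    _ = B δ 1 * x u := by rw [hroot_eq, lam_apply, hu]

/-- Rigidity: if `A : ℓ₂(T) → ℂ^T` is any linear operator (not assumed bounded) with
`d(g) = Aλ(g) − λ(g)A` for all `g ∈ Aut(T)`, then `A = L* + ϑ·Id` for some `ϑ ∈ ℂ`. -/
theorem dtree_implementing_operator_unique
    (A : lpT 2 →ₗ[ℂ] (V → ℂ))
    (hA : ∀ g : TreeAut, ∀ x : lpT 2,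
      dtree g.toEquiv (x : V → ℂ) = A (lam 2 g.toEquiv x) - lamFull g.toEquiv (A x)) :
    ∃ ϑ : ℂ, ∀ x : lpT 2, A x = Lstar (x : V → ℂ) + ϑ • (x : V → ℂ) := by
  let coe : lpT 2 →ₗ[ℂ] (V → ℂ) := LinearMap.pi (lp.evalₗ (fun _ : V => ℂ) 2)
  have hcoe : ∀ x, coe x = x := fun _ => rfl
  obtain ⟨θ, hθ⟩ := exists_eq_smul_of_intertwines_lam (A - Lstar ∘ₗ coe) fun g x => by
    funext v
    have := congrFun (hA g x) v
    simp only [dtree, LinearMap.sub_apply, LinearMap.comp_apply, map_sub, Pi.sub_apply] at this ⊢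
    rw [hcoe, hcoe, coe_lam]
    linear_combination -this
  exact ⟨θ, fun x => by simpa [hcoe, sub_eq_iff_eq_add'] using hθ x⟩
end
end

section
/- The derivation d(g) = L*λ(g) − λ(g)L* of Aut(T) on ℓ₂(T) is not inner: there is no bounded operator A ∈ B(ℓ₂(T)) with d(g) = Aλ(g) − λ(g)A for all g ∈ Aut(T). -/
/-!
Write `a(v, t) = (A δ_t)(v)` for the matrix of `A`. The identity `d(g) = Aλ(g) − λ(g)A` reads
`a(g v, g t) − a(v, t) = (d(g) δ_t)(g v)`. Automorphisms induced by permutations of the free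
generators fix the root `e` and commute with the parent map, so `d` vanishes on them and the
matrix of `A` is invariant under them: the row entries `a(e, of i)` and the column entries
`a((of i)⁻¹, e)` do not depend on `i`. Rows and columns of a bounded operator on `ℓ₂` are
square-summable, so both vanish. But the translation by `of i` maps `(of i)⁻¹` to `e`, and for it
the identity gives `a(e, of i) − a((of i)⁻¹, e) = −1`.
-/

open scoped ENNReal

noncomputable section

attribute [local instance] Classical.propDecidable

namespace FreeGroup

variable {α β : Type*} [DecidableEq α] [DecidableEq β]

theorem reduce_map_of_injective {f : α → β} (hf : Function.Injective f) (L : List (α × Bool)) :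
    reduce (L.map fun x => (f x.1, x.2)) = (reduce L).map fun x => (f x.1, x.2) := by
  induction L with
  | nil => rfl
  | cons x L ih =>
    rw [List.map_cons, reduce.cons, reduce.cons, ih]
    rcases reduce L with _ | ⟨y, L'⟩
    · rfl
    · simp only [List.map_cons, hf.eq_iff]
      split_ifs <;> rfl

theorem toWord_map_of_injective {f : α → β} (hf : Function.Injective f) (x : FreeGroup α) :
    (map f x).toWord = x.toWord.map fun x => (f x.1, x.2) := by
  rw [← mk_toWord (x := x), map.mk, toWord_mk, toWord_mk, reduce_map_of_injective hf,
    reduce_toWord]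

end FreeGroup

open FreeGroup

theorem parent_map_of_injective {f : ℕ → ℕ} (hf : Function.Injective f) (v : V) :
    parent (map f v) = map f (parent v) := by
  rw [parent, parent, toWord_map_of_injective hf, map.mk, List.map_dropLast]

@[simp]
theorem map_root (f : ℕ → ℕ) : map f root = root :=
  _root_.map_one _

theorem parent_of_inv (i : ℕ) : parent (of i)⁻¹ = root := by
  simp [parent, toWord_inv, invRev, root, one_eq_mk]

theorem dtree_apply (g : V ≃ V) (x : V → ℂ) (v : V) :
    dtree g x v = (if v = root then 0 else x (g.symm (parent v)))
      - (if g.symm v = root then 0 else x (parent (g.symm v))) := rfl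

theorem dtree_eq_zero_of_commute_parent (g : V ≃ V) (hroot : g root = root)
    (hparent : ∀ v, parent (g v) = g (parent v)) : dtree g = 0 := by
  ext x v
  have hroot' : g.symm v = root ↔ v = root := by rw [g.symm_apply_eq, hroot]
  have hparent' : parent (g.symm v) = g.symm (parent v) := by
    rw [g.eq_symm_apply, ← hparent, g.apply_symm_apply]
  simp [dtree_apply, hroot', hparent']

theorem lam_single {p : ℝ≥0∞} (g : V ≃ V) (t : V) (a : ℂ) :
    lam p g (lp.single p t a) = lp.single p (g t) a := by
  ext v
  change (lp.single p t a : V → ℂ) (g.symm v) = (lp.single p (g t) a : V → ℂ) v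
  simp [Pi.single_apply, g.symm_apply_eq]

def treeAutOfEdgeRel (f : V ≃ V)
    (hf : ∀ s t, (∃ i, f t = f s * of i) ↔ ∃ i, t = s * of i) : TreeAut :=
  ⟨f, by simp [treeGraph, SimpleGraph.fromRel_adj, hf]⟩

def translateAut (a : V) : TreeAut :=
  treeAutOfEdgeRel (Equiv.mulLeft a) fun s t => by simp [mul_assoc]

def permGeneratorsAut (e : ℕ ≃ ℕ) : TreeAut :=
  treeAutOfEdgeRel (freeGroupCongr e).toEquiv fun s t => by
    rw [e.symm.exists_congr_left]
    refine exists_congr fun i => ?_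
    change freeGroupCongr e t = freeGroupCongr e s * of (e.symm.symm i) ↔ _
    rw [Equiv.symm_symm, show of (e i) = freeGroupCongr e (of i) from map.of, ← _root_.map_mul,
      EquivLike.apply_eq_iff_eq]

@[simp]
theorem permGeneratorsAut_apply (e : ℕ ≃ ℕ) (v : V) : permGeneratorsAut e v = map e v := rfl

theorem lp.eq_zero_of_apply_eq_const {ι E : Type*} [NormedAddCommGroup E] {p : ℝ≥0∞}
    (hp : 0 < p.toReal) (x : lp (fun _ : ι => E) p) {s : ℕ → ι} (hs : Function.Injective s)
    {c : E} (h : ∀ n, x (s n) = c) : c = 0 := by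
  have hsum := ((memℓp_gen_iff hp).1 (lp.memℓp x)).comp_injective hs
  simp only [Function.comp_def, h, summable_const_iff] at hsum
  simpa [hp.ne'] using hsum

open ComplexConjugate in
theorem ContinuousLinearMap.eq_zero_of_apply_single_apply_eq_const {ι : Type*} [DecidableEq ι]
    (A : lp (fun _ : ι => ℂ) 2 →L[ℂ] lp (fun _ : ι => ℂ) 2) (r : ι) {s : ℕ → ι}
    (hs : Function.Injective s) {c : ℂ} (h : ∀ n, A (lp.single 2 (s n) 1) r = c) : c = 0 := by
  have hadjoint : ∀ t, conj (A.adjoint (lp.single 2 r 1) t) = A (lp.single 2 t 1) r := by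
    intro t
    have := A.adjoint_inner_left (lp.single 2 t 1) (lp.single 2 r 1)
    simpa [lp.inner_single_left, lp.inner_single_right] using this
  have := lp.eq_zero_of_apply_eq_const (by norm_num) (A.adjoint (lp.single 2 r 1)) hs
    (c := conj c) fun n => by rw [← h n, ← hadjoint, Complex.conj_conj]
  simpa using this

def ImplementsDtree (A : lpT 2 →L[ℂ] lpT 2) : Prop :=
  ∀ g : TreeAut, ∀ x : lpT 2,
    dtree g.toEquiv (x : V → ℂ) = (A (lam 2 g.toEquiv x) : V → ℂ) - lamFull g.toEquiv (A x : V → ℂ)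

namespace ImplementsDtree

variable {A : lpT 2 →L[ℂ] lpT 2}

theorem apply_single_apply_sub (hA : ImplementsDtree A) (g : TreeAut) (t v : V) :
    A (lp.single 2 (g t) 1) (g v) - A (lp.single 2 t 1) v
      = dtree g.toEquiv (lp.single 2 t 1 : V → ℂ) (g v) := by
  rw [hA, lam_single]
  simp only [lamFull, Pi.sub_apply, LinearMap.coe_mk, AddHom.coe_mk]
  rw [show g.toEquiv.symm (g v) = v from g.toEquiv.symm_apply_apply v]
  rfl

theorem apply_single_apply_map_eq (hA : ImplementsDtree A) (e : ℕ ≃ ℕ) (t v : V) :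
    A (lp.single 2 (map e t) 1) (map e v) = A (lp.single 2 t 1) v := by
  have hdtree : dtree (permGeneratorsAut e).toEquiv = 0 :=
    dtree_eq_zero_of_commute_parent _ (map_root e) (parent_map_of_injective e.injective)
  simpa [hdtree, sub_eq_zero] using hA.apply_single_apply_sub (permGeneratorsAut e) t v

theorem apply_single_of_root_sub_eq_neg_one (hA : ImplementsDtree A) (i : ℕ) :
    A (lp.single 2 (of i) 1) root - A (lp.single 2 root 1) (of i)⁻¹ = -1 := by
  have hroot : translateAut (of i) root = of i := mul_one (of i)
  have hinv : translateAut (of i) (of i)⁻¹ = root := mul_inv_cancel (of i)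
  have := hA.apply_single_apply_sub (translateAut (of i)) root (of i)⁻¹
  rw [hroot, hinv] at this
  have hsymm : (translateAut (of i)).toEquiv.symm root = (of i)⁻¹ := mul_one (of i)⁻¹
  have hne : (of i)⁻¹ ≠ root := inv_ne_one.2 (of_ne_one i)
  rw [this, dtree_apply, if_pos rfl, hsymm, if_neg hne, parent_of_inv]
  simp

end ImplementsDtree

/-- The derivation `d(g) = L*λ(g) − λ(g)L*` of `Aut(T)` on `ℓ₂(T)` is not inner:
no bounded operator `A ∈ B(ℓ₂(T))` satisfies `d(g) = Aλ(g) − λ(g)A` for all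
`g ∈ Aut(T)`. -/
theorem dtree_not_inner :
    ¬ ∃ A : lpT 2 →L[ℂ] lpT 2, ∀ g : TreeAut, ∀ x : lpT 2,
      dtree g.toEquiv (x : V → ℂ)
        = ((A (lam 2 g.toEquiv x) : lpT 2) : V → ℂ)
          - lamFull g.toEquiv ((A x : lpT 2) : V → ℂ) := by
  rintro ⟨A, hA : ImplementsDtree A⟩
  have hrow : ∀ n, A (lp.single 2 (of n) 1) root = A (lp.single 2 (of 0) 1) root := fun n => by
    simpa using hA.apply_single_apply_map_eq (Equiv.swap 0 n) (of 0) root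
  have hcol : ∀ n, A (lp.single 2 root 1) (of n)⁻¹ = A (lp.single 2 root 1) (of 0)⁻¹ :=
    fun n => by simpa using hA.apply_single_apply_map_eq (Equiv.swap 0 n) root (of 0)⁻¹
  have hrow_zero := A.eq_zero_of_apply_single_apply_eq_const root of_injective hrow
  have hcol_zero := lp.eq_zero_of_apply_eq_const (by norm_num) (A (lp.single 2 root 1))
    (inv_injective.comp of_injective) hcol
  have := hA.apply_single_of_root_sub_eq_neg_one 0
  rw [hrow_zero, hcol_zero] at this
  norm_num at this
end
end
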